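/- Let a, b ≥ 0 with 0 < 1 - b + a < 1 (equivalently a < b < a + 1), let β ≤ b - a, and let α be a real number. Suppose the function f_{α,β}(x) := (x + a)^α · [ψ(x + b) - ψ(x + a) - β/(x + a)] is completely monotone on (-a, ∞). Then: if β < b - a then α ≤ 1, and if β = b - a then α ≤ 2. -/

import Mathlib

open Set Real

def CompletelyMonotoneOn (f : ℝ → ℝ) (I : Set ℝ) : Prop :=
  ContDiffOn ℝ (⊤ : ℕ∞) f I ∧
    ∀ (n : ℕ), ∀ x ∈ I, 0 ≤ (-1 : ℝ) ^ n * iteratedDerivWithin n f I x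

noncomputable def digamma (x : ℝ) : ℝ := deriv Real.Gamma x / Real.Gamma x

open Filter Topology

section DigammaAux

private lemma diffGamma {x : ℝ} (hx : 0 < x) : DifferentiableAt ℝ Real.Gamma x :=
  Real.differentiableAt_Gamma fun m =>
    ne_of_gt (lt_of_le_of_lt (neg_nonpos.mpr (Nat.cast_nonneg m)) hx)

private lemma difflogGamma {x : ℝ} (hx : 0 < x) :
    DifferentiableAt ℝ (Real.log ∘ Real.Gamma) x :=
  (diffGamma hx).log (Real.Gamma_pos_of_pos hx).ne'

private lemma digamma_eq {x : ℝ} (hx : 0 < x) :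
    digamma x = deriv (Real.log ∘ Real.Gamma) x := by
  rw [Function.comp_def, deriv.log (diffGamma hx) (Real.Gamma_pos_of_pos hx).ne']
  rfl

private lemma digamma_rec {x : ℝ} (hx : 0 < x) : digamma (x + 1) = digamma x + 1 / x := by
  have h_rec : ∀ y : ℝ, 0 < y →
      (Real.log ∘ Real.Gamma) (y + 1) = (Real.log ∘ Real.Gamma) y + Real.log y := by
    intro y hy
    simp only [Function.comp_apply, Real.Gamma_add_one hy.ne',
      Real.log_mul hy.ne' (Real.Gamma_pos_of_pos hy).ne', add_comm]
  rw [digamma_eq (by linarith : (0:ℝ) < x + 1), digamma_eq hx]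
  rw [← deriv_comp_add_const, one_div, ← Real.deriv_log,
    ← deriv_add (difflogGamma hx) (Real.differentiableAt_log hx.ne')]
  apply Filter.EventuallyEq.deriv_eq
  filter_upwards [eventually_gt_nhds hx] using h_rec

private lemma digamma_mono {x y : ℝ} (hx : 0 < x) (hxy : x ≤ y) : digamma x ≤ digamma y := by
  have hy : 0 < y := lt_of_lt_of_le hx hxy
  rw [digamma_eq hx, digamma_eq hy]
  exact Real.convexOn_log_Gamma.monotoneOn_deriv (fun z hz => difflogGamma hz)
    (mem_Ioi.mpr hx) (mem_Ioi.mpr hy) hxy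

private lemma digamma_diff_nonneg {y s : ℝ} (hy : 0 < y) (hs : 0 ≤ s) :
    0 ≤ digamma (y + s) - digamma y :=
  sub_nonneg.mpr (digamma_mono hy (by linarith))

/-- one-step identity for `F t = ψ(t+s) - ψ(t) - s/t`. -/
private lemma step_F {s t : ℝ} (hs0 : 0 < s) (ht : 0 < t) :
    digamma (t + s) - digamma t - s / t =
      (digamma (t + 1 + s) - digamma (t + 1) - s / (t + 1)) +
        s * (1 - s) / (t * (t + s) * (t + 1)) := by
  have h1 : digamma (t + 1) = digamma t + 1 / t := digamma_rec ht
  have h2 : digamma (t + 1 + s) = digamma (t + s) + 1 / (t + s) := by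
    have h := digamma_rec (x := t + s) (by linarith)
    rw [show t + s + 1 = t + 1 + s by ring] at h
    exact h
  rw [h1, h2]
  have hts : t + s ≠ 0 := by positivity
  have ht1 : t + 1 ≠ 0 := by positivity
  field_simp
  ring

private lemma F_step_le {s u : ℝ} (hs0 : 0 < s) (hs1 : s ≤ 1) (hu : 0 < u) :
    digamma (u + 1 + s) - digamma (u + 1) - s / (u + 1) ≤
      digamma (u + s) - digamma u - s / u := by
  rw [step_F hs0 hu]
  have : 0 ≤ s * (1 - s) / (u * (u + s) * (u + 1)) :=
    div_nonneg (by nlinarith) (by positivity)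
  linarith

private lemma F_ge {s t : ℝ} (hs0 : 0 < s) (hs1 : s ≤ 1) (ht : 0 < t) (n : ℕ) :
    digamma (t + n + s) - digamma (t + n) - s / (t + n) ≤
      digamma (t + s) - digamma t - s / t := by
  induction n with
  | zero => simp
  | succ n ih =>
    have h := F_step_le hs0 hs1 (u := t + n) (by positivity)
    push_cast
    rw [show t + ((n : ℝ) + 1) = t + (n : ℝ) + 1 by ring]
    exact h.trans ih

private lemma tendsto_aux (t c : ℝ) (ht : 0 < t) :
    Tendsto (fun n : ℕ => c / (t + n)) atTop (𝓝 0) := by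
  have h1 : Tendsto (fun n : ℕ => t + (n : ℝ)) atTop atTop :=
    tendsto_atTop_add_const_left _ t tendsto_natCast_atTop_atTop
  have h2 : Tendsto (fun n : ℕ => (t + (n : ℝ))⁻¹) atTop (𝓝 0) := h1.inv_tendsto_atTop
  have := h2.const_mul c
  simpa [div_eq_mul_inv, mul_zero] using this

/-- Lemma A : `ψ(t+s) - ψ(t) ≥ s/t` for `0 < s ≤ 1`, `t > 0`. -/
private lemma lemmaA {s t : ℝ} (hs0 : 0 < s) (hs1 : s ≤ 1) (ht : 0 < t) :
    s / t ≤ digamma (t + s) - digamma t := by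
  have key : ∀ n : ℕ, -(s / (t + n)) ≤ digamma (t + s) - digamma t - s / t := by
    intro n
    have h1 := F_ge hs0 hs1 ht n
    have h2 : 0 ≤ digamma (t + n + s) - digamma (t + n) :=
      digamma_diff_nonneg (by positivity) hs0.le
    linarith
  have hlim : Tendsto (fun n : ℕ => -(s / (t + n))) atTop (𝓝 0) := by
    simpa using (tendsto_aux t s ht).neg
  have := le_of_tendsto' hlim key
  linarith

private lemma G_step_le {s u : ℝ} (hs0 : 0 < s) (hs1 : s ≤ 1) (hu : 0 < u) :
    digamma (u + 1 + s) - digamma (u + 1) - s / (u + 1) -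
        s * (1 - s) / (2 * (u + 1) * (u + 1 + 1)) ≤
      digamma (u + s) - digamma u - s / u - s * (1 - s) / (2 * u * (u + 1)) := by
  rw [step_F hs0 hu]
  have h1 : s * (1 - s) / (2 * u * (u + 1)) - s * (1 - s) / (2 * (u + 1) * (u + 1 + 1)) =
      s * (1 - s) / (u * (u + 1) * (u + 2)) := by
    field_simp
    ring
  have h2 : s * (1 - s) / (u * (u + 1) * (u + 2)) ≤ s * (1 - s) / (u * (u + s) * (u + 1)) := by
    refine div_le_div_of_nonneg_left (by nlinarith) (by positivity) ?_
    have hu1 : (0:ℝ) < u * (u + 1) := by positivity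
    nlinarith [mul_nonneg hu1.le (by linarith : (0:ℝ) ≤ 2 - s)]
  linarith

private lemma G_ge {s t : ℝ} (hs0 : 0 < s) (hs1 : s ≤ 1) (ht : 0 < t) (n : ℕ) :
    digamma (t + n + s) - digamma (t + n) - s / (t + n) -
        s * (1 - s) / (2 * (t + n) * (t + n + 1)) ≤
      digamma (t + s) - digamma t - s / t - s * (1 - s) / (2 * t * (t + 1)) := by
  induction n with
  | zero => simp
  | succ n ih =>
    have h := G_step_le hs0 hs1 (u := t + n) (by positivity)
    push_cast
    rw [show t + ((n : ℝ) + 1) = t + (n : ℝ) + 1 by ring]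
    exact h.trans ih

/-- Lemma B : `ψ(t+s) - ψ(t) - s/t ≥ s(1-s)/(2t(t+1))`. -/
private lemma lemmaB {s t : ℝ} (hs0 : 0 < s) (hs1 : s ≤ 1) (ht : 0 < t) :
    s * (1 - s) / (2 * t * (t + 1)) ≤ digamma (t + s) - digamma t - s / t := by
  have key : ∀ n : ℕ, -(s / (t + n)) - s * (1 - s) / (2 * (t + n) * (t + n + 1)) ≤
      digamma (t + s) - digamma t - s / t - s * (1 - s) / (2 * t * (t + 1)) := by
    intro n
    have h1 := G_ge hs0 hs1 ht n
    have h2 : 0 ≤ digamma (t + n + s) - digamma (t + n) :=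
      digamma_diff_nonneg (by positivity) hs0.le
    linarith
  have hlim : Tendsto
      (fun n : ℕ => -(s / (t + n)) - s * (1 - s) / (2 * (t + n) * (t + n + 1)))
      atTop (𝓝 0) := by
    have l1 : Tendsto (fun n : ℕ => -(s / (t + n))) atTop (𝓝 0) := by
      simpa using (tendsto_aux t s ht).neg
    have l2 : Tendsto (fun n : ℕ => s * (1 - s) / (2 * (t + n) * (t + n + 1))) atTop (𝓝 0) := by
      have h1 : Tendsto (fun n : ℕ => t + (n : ℝ)) atTop atTop :=
        tendsto_atTop_add_const_left _ t tendsto_natCast_atTop_atTop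
      have h2 : Tendsto (fun n : ℕ => 2 * (t + (n : ℝ)) * (t + (n : ℝ) + 1)) atTop atTop := by
        apply Tendsto.atTop_mul_atTop₀
        · exact (tendsto_const_mul_atTop_of_pos (by norm_num : (0:ℝ) < 2)).mpr h1
        · exact tendsto_atTop_add_const_right _ 1 h1
      have h3 := h2.inv_tendsto_atTop
      have := h3.const_mul (s * (1 - s))
      simpa [div_eq_mul_inv, mul_zero] using this
    simpa using l1.sub l2
  have := le_of_tendsto' hlim key
  linarith

end DigammaAux

theorem f_alpha_beta_completely_monotone_necessary (a b α β : ℝ)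
    (ha : 0 ≤ a) (hb : 0 ≤ b) (h1 : 0 < 1 - b + a) (h2 : 1 - b + a < 1)
    (hβ : β ≤ b - a)
    (hcm : CompletelyMonotoneOn
      (fun x => (x + a) ^ α * (digamma (x + b) - digamma (x + a) - β / (x + a)))
      (Set.Ioi (-a))) :
    (β < b - a → α ≤ 1) ∧ (β = b - a → α ≤ 2) := by
  have hs0 : 0 < b - a := by linarith
  have hs1 : b - a < 1 := by linarith
  set f : ℝ → ℝ :=
    fun x => (x + a) ^ α * (digamma (x + b) - digamma (x + a) - β / (x + a)) with hf
  obtain ⟨hsmooth, hmono⟩ := hcm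
  have hopen : IsOpen (Ioi (-a)) := isOpen_Ioi
  have hf0 : ∀ x ∈ Ioi (-a), 0 ≤ f x := by
    intro x hx
    have h := hmono 0 x hx
    simpa [iteratedDerivWithin_zero] using h
  have hderiv : ∀ x ∈ Ioi (-a), deriv f x ≤ 0 := by
    intro x hx
    have h := hmono 1 x hx
    rw [iteratedDerivWithin_one,
      derivWithin_of_isOpen hopen hx] at h
    simpa using h
  have hanti : AntitoneOn f (Ioi (-a)) := by
    apply antitoneOn_of_deriv_nonpos (convex_Ioi _) hsmooth.continuousOn
    · rw [interior_Ioi]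
      exact hsmooth.differentiableOn (by simp)
    · intro x hx
      exact hderiv x (by rwa [interior_Ioi] at hx)
  have hmem1 : (1 : ℝ) ∈ Ioi (-a) := by
    simp only [mem_Ioi]
    linarith
  -- lower bound valid for any β ≤ b - a
  have hlow1 : ∀ x : ℝ, -a < x → (b - a - β) * (x + a) ^ (α - 1) ≤ f x := by
    intro x hx
    have hxa : 0 < x + a := by linarith
    have hA : (b - a) / (x + a) ≤ digamma ((x + a) + (b - a)) - digamma (x + a) :=
      lemmaA hs0 hs1.le hxa
    rw [show (x + a) + (b - a) = x + b by ring] at hA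
    have hpow : (0 : ℝ) < (x + a) ^ α := rpow_pos_of_pos hxa α
    have e : (x + a) ^ (α - 1) = (x + a) ^ α / (x + a) := by
      rw [Real.rpow_sub hxa, Real.rpow_one]
    have hg : (b - a - β) / (x + a) ≤ digamma (x + b) - digamma (x + a) - β / (x + a) := by
      have hr : (b - a) / (x + a) - β / (x + a) = (b - a - β) / (x + a) := by ring
      linarith
    calc (b - a - β) * (x + a) ^ (α - 1)
        = (x + a) ^ α * ((b - a - β) / (x + a)) := by rw [e]; ring
      _ ≤ f x := mul_le_mul_of_nonneg_left hg hpow.le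
  constructor
  · -- case β < b - a : show α ≤ 1
    intro hβlt
    by_contra hα
    push_neg at hα
    have htends : Tendsto (fun x : ℝ => (b - a - β) * (x + a) ^ (α - 1)) atTop atTop := by
      apply Tendsto.const_mul_atTop (by linarith : (0:ℝ) < b - a - β)
      exact (tendsto_rpow_atTop (by linarith : (0:ℝ) < α - 1)).comp
        (tendsto_atTop_add_const_right _ a tendsto_id)
    obtain ⟨x, hxgt, hx1⟩ :=
      ((htends.eventually_gt_atTop (f 1)).and (eventually_ge_atTop (1 : ℝ))).exists
    have hxmem : x ∈ Ioi (-a) := by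
      simp only [mem_Ioi]; linarith
    have hle : f x ≤ f 1 := hanti hmem1 hxmem hx1
    have := hlow1 x (by linarith)
    linarith
  · -- case β = b - a : show α ≤ 2
    intro hβeq
    subst hβeq
    by_contra hα
    push_neg at hα
    have hlow2 : ∀ x : ℝ, 1 ≤ x →
        (b - a) * (1 - (b - a)) / 4 * (x + a) ^ (α - 2) ≤ f x := by
      intro x hx
      have hxa1 : (1 : ℝ) ≤ x + a := by linarith
      have hxa : 0 < x + a := by linarith
      have hB : (b - a) * (1 - (b - a)) / (2 * (x + a) * ((x + a) + 1)) ≤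
          digamma ((x + a) + (b - a)) - digamma (x + a) - (b - a) / (x + a) :=
        lemmaB hs0 hs1.le hxa
      rw [show (x + a) + (b - a) = x + b by ring] at hB
      have hB2 : (b - a) * (1 - (b - a)) / 4 / ((x + a) * (x + a)) ≤
          (b - a) * (1 - (b - a)) / (2 * (x + a) * ((x + a) + 1)) := by
        rw [div_div]
        exact div_le_div_of_nonneg_left (by nlinarith) (by positivity) (by nlinarith)
      have hpow : (0 : ℝ) < (x + a) ^ α := rpow_pos_of_pos hxa α
      have e : (x + a) ^ (α - 2) = (x + a) ^ α / ((x + a) * (x + a)) := by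
        rw [Real.rpow_sub hxa, show (2:ℝ) = ((2:ℕ):ℝ) by norm_num, Real.rpow_natCast]
        ring_nf
      calc (b - a) * (1 - (b - a)) / 4 * (x + a) ^ (α - 2)
          = (x + a) ^ α * ((b - a) * (1 - (b - a)) / 4 / ((x + a) * (x + a))) := by
            rw [e]; ring
        _ ≤ (x + a) ^ α * ((b - a) * (1 - (b - a)) / (2 * (x + a) * ((x + a) + 1))) :=
            mul_le_mul_of_nonneg_left hB2 hpow.le
        _ ≤ f x := mul_le_mul_of_nonneg_left hB hpow.le
    have htends : Tendsto
        (fun x : ℝ => (b - a) * (1 - (b - a)) / 4 * (x + a) ^ (α - 2)) atTop atTop := by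
      apply Tendsto.const_mul_atTop (by nlinarith : (0:ℝ) < (b - a) * (1 - (b - a)) / 4)
      exact (tendsto_rpow_atTop (by linarith : (0:ℝ) < α - 2)).comp
        (tendsto_atTop_add_const_right _ a tendsto_id)
    obtain ⟨x, hxgt, hx1⟩ :=
      ((htends.eventually_gt_atTop (f 1)).and (eventually_ge_atTop (1 : ℝ))).exists
    have hxmem : x ∈ Ioi (-a) := by
      simp only [mem_Ioi]; linarith
    have hle : f x ≤ f 1 := hanti hmem1 hxmem hx1
    have := hlow2 x hx1
    linarith
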